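/- arXiv:2507.09511 — 3 statements merged into one kernel-verified Lean document; each statement's English description precedes it below -/
import Mathlib

section
/- For every integer ℓ ≥ 1, the largest adjacency eigenvalue of T(ℓ,ℓ,ℓ) is strictly less than 3/√2. -/
open scoped Classical

/-- The real adjacency matrix of a finite simple graph. -/
noncomputable def adjMat {V : Type*} [Fintype V] [DecidableEq V] (G : SimpleGraph V) :
    Matrix V V ℝ :=
  Matrix.of fun u v => if G.Adj u v then (1 : ℝ) else 0

/-- The eigenvalues (roots of the characteristic polynomial, with multiplicity) of a real
matrix, listed in nondecreasing order. -/
noncomputable def eigList {V : Type*} [Fintype V] [DecidableEq V] (A : Matrix V V ℝ) : List ℝ :=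
  A.charpoly.roots.sort (· ≤ ·)

/-- The `k`-th largest eigenvalue (with multiplicity) of `A`, 1-indexed:
`eig A 1 ≥ eig A 2 ≥ …`. -/
noncomputable def eig {V : Type*} [Fintype V] [DecidableEq V] (A : Matrix V V ℝ) (k : ℕ) : ℝ :=
  (eigList A).getD ((eigList A).length - k) 0

/-- The `k`-th largest adjacency eigenvalue of a finite simple graph (`λₖ(G)`). -/
noncomputable def graphEig {V : Type*} [Fintype V] [DecidableEq V] (G : SimpleGraph V)
    (k : ℕ) : ℝ :=
  eig (adjMat G) k

/-- The multiplicity of `μ` as an eigenvalue of `A` (dimension of the eigenspace). -/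
noncomputable def eigMult {V : Type*} [Fintype V] [DecidableEq V] (A : Matrix V V ℝ)
    (μ : ℝ) : ℕ :=
  Module.finrank ℝ (LinearMap.ker (A.mulVecLin - μ • LinearMap.id))

/-- The number of edges of a finite simple graph. -/
noncomputable def edgeCount {V : Type*} [Fintype V] (G : SimpleGraph V) : ℕ :=
  G.edgeSet.toFinite.toFinset.card

/-- The cyclomatic number `|E| - |V| + 1` of a (connected) finite graph. -/
noncomputable def cyclomatic {V : Type*} [Fintype V] (G : SimpleGraph V) : ℕ :=
  edgeCount G + 1 - Fintype.card V

/-- The maximum degree of a finite simple graph. -/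
noncomputable def maxDeg {V : Type*} [Fintype V] (G : SimpleGraph V) : ℕ :=
  Finset.univ.sup fun v => (G.neighborSet v).toFinite.toFinset.card

/-- The spider `T(ℓ,ℓ,ℓ)`: three paths of length `ℓ` (in edges) sharing exactly their
initial vertex `none`. -/
def spider (ℓ : ℕ) : SimpleGraph (Option (Fin 3 × Fin ℓ)) :=
  SimpleGraph.fromRel fun u v =>
    match u, v with
    | none, some (_, j) => (j : ℕ) = 0
    | some (i, j), some (i', j') => i = i' ∧ (j' : ℕ) = (j : ℕ) + 1
    | _, _ => False

/-!
Collatz–Wielandt: a positive vector `x` with `A x < μ x` entrywise bounds every real eigenvalue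
of a nonnegative matrix `A` strictly by `μ`. On `T(ℓ,ℓ,ℓ)` take `x` radial, with value `x_k` at
distance `k` from the centre. Since `√2 + 1/√2 = 3/√2`, both `(√2)^(-k)` and `(√2)^k` satisfy
`x_{k-1} + x_{k+1} = (3/√2) x_k`, and so does `(√2)^(-k) - ε (√2)^k + ε` up to the error
`(2 - 3/√2) ε < 0`. With `ε = 2^(-(ℓ+1))` this sequence is positive up to `k = ℓ + 1`, where
it equals `ε`, which makes the inequality strict at the leaves as well; at the centre
`3 x_1 < (3/√2) x_0` because `√2 > 1`.
-/

open Matrix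

theorem Matrix.exists_mulVec_eq_smul_of_isRoot_charpoly {n K : Type*} [Fintype n] [DecidableEq n]
    [Field K] {A : Matrix n n K} {r : K} (h : A.charpoly.IsRoot r) : ∃ v ≠ 0, A *ᵥ v = r • v := by
  have hr : r ∈ spectrum K (toLin' A) := by
    rw [spectrum_toLin']; exact mem_spectrum_of_isRoot_charpoly h
  obtain ⟨v, hv⟩ := (Module.End.hasEigenvalue_iff_mem_spectrum.2 hr).exists_hasEigenvector
  exact ⟨v, hv.2, by simpa using hv.apply_eq_smul⟩

section CollatzWielandt

variable {n : Type*} [Fintype n] {A : Matrix n n ℝ} {x : n → ℝ} {μ : ℝ}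

theorem Matrix.abs_lt_of_mulVec_lt (hA : ∀ i j, 0 ≤ A i j) (hx : ∀ i, 0 < x i)
    (hAx : ∀ i, (A *ᵥ x) i < μ * x i) {r : ℝ} {y : n → ℝ} (hy : y ≠ 0) (hAy : A *ᵥ y = r • y) :
    |r| < μ := by
  obtain ⟨i₀, hi₀⟩ := Function.ne_iff.1 hy
  obtain ⟨i, -, hmax⟩ :=
    Finset.exists_max_image Finset.univ (fun j => |y j| / x j) ⟨i₀, Finset.mem_univ _⟩
  set c := |y i| / x i
  have hyc : ∀ j, |y j| ≤ c * x j := fun j => (div_le_iff₀ (hx j)).1 (hmax j (Finset.mem_univ j))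
  have hc : 0 < c := (div_pos (abs_pos.2 hi₀) (hx i₀)).trans_le (hmax i₀ (Finset.mem_univ _))
  have hyi : |y i| = c * x i := (div_mul_cancel₀ _ (hx i).ne').symm
  refine lt_of_mul_lt_mul_right (a := |y i|) ?_ (abs_nonneg _)
  calc |r| * |y i| = |∑ j, A i j * y j| := by
        rw [← abs_mul, ← smul_eq_mul, ← Pi.smul_apply, ← hAy]; rfl
    _ ≤ ∑ j, A i j * |y j| := by
        refine (Finset.abs_sum_le_sum_abs _ _).trans_eq (Finset.sum_congr rfl fun j _ => ?_)
        rw [abs_mul, abs_of_nonneg (hA i j)]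
    _ ≤ ∑ j, A i j * (c * x j) := by gcongr with j; exact hA i j; exact hyc j
    _ = c * (A *ᵥ x) i := by
        simp only [mulVec, dotProduct, Finset.mul_sum]
        exact Finset.sum_congr rfl fun j _ => by ring
    _ < c * (μ * x i) := by gcongr; exact hAx i
    _ = μ * |y i| := by rw [hyi]; ring

theorem Matrix.lt_of_isRoot_charpoly_of_mulVec_lt [DecidableEq n] (hA : ∀ i j, 0 ≤ A i j)
    (hx : ∀ i, 0 < x i) (hAx : ∀ i, (A *ᵥ x) i < μ * x i) {r : ℝ} (hr : A.charpoly.IsRoot r) :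
    r < μ :=
  let ⟨_, hy, hAy⟩ := exists_mulVec_eq_smul_of_isRoot_charpoly hr
  (le_abs_self r).trans_lt (abs_lt_of_mulVec_lt hA hx hAx hy hAy)

theorem eig_eq_zero_or_isRoot [DecidableEq n] (A : Matrix n n ℝ) (k : ℕ) :
    eig A k = 0 ∨ A.charpoly.IsRoot (eig A k) := by
  rw [eig, List.getD_eq_getElem?_getD]
  cases h : (eigList A)[(eigList A).length - k]? with
  | none => simp
  | some r =>
    exact .inr (Polynomial.isRoot_of_mem_roots ((Multiset.mem_sort _).1 (List.mem_of_getElem? h)))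

theorem eig_lt_of_mulVec_lt [DecidableEq n] [Nonempty n] (hA : ∀ i j, 0 ≤ A i j)
    (hx : ∀ i, 0 < x i) (hAx : ∀ i, (A *ᵥ x) i < μ * x i) (k : ℕ) : eig A k < μ := by
  rcases eig_eq_zero_or_isRoot A k with h | h
  · obtain ⟨i⟩ := ‹Nonempty n›
    have hAx_nonneg : 0 ≤ (A *ᵥ x) i :=
      Finset.sum_nonneg fun j _ => mul_nonneg (hA i j) (hx j).le
    rw [h]
    exact pos_of_mul_pos_left (hAx_nonneg.trans_lt (hAx i)) (hx i).le
  · exact lt_of_isRoot_charpoly_of_mulVec_lt hA hx hAx h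

end CollatzWielandt

theorem adjMat_nonneg {V : Type*} [Fintype V] [DecidableEq V] (G : SimpleGraph V) (u v : V) :
    0 ≤ adjMat G u v := by
  simp only [adjMat, of_apply]; split_ifs <;> norm_num

theorem adjMat_mulVec_apply {V : Type*} [Fintype V] [DecidableEq V] (G : SimpleGraph V)
    (x : V → ℝ) (v : V) : (adjMat G *ᵥ x) v = ∑ w, if G.Adj v w then x w else 0 := by
  simp only [adjMat, mulVec, dotProduct, of_apply, boole_mul]

theorem Fin.sum_ite_val_eq {M : Type*} [AddCommMonoid M] (n m : ℕ) (g : ℕ → M) :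
    ∑ j : Fin n, (if (j : ℕ) = m then g j else 0) = if m < n then g m else 0 := by
  rw [Fin.sum_univ_eq_sum_range (fun j => if j = m then g j else 0), Finset.sum_ite_eq']
  simp only [Finset.mem_range]

theorem Fin.sum_ite_val_eq_or {M : Type*} [AddCommMonoid M] (n a b : ℕ) (hab : a ≠ b)
    (g : ℕ → M) :
    ∑ j : Fin n, (if (j : ℕ) = a ∨ (j : ℕ) = b then g j else 0) =
      (if a < n then g a else 0) + if b < n then g b else 0 := by
  rw [← Fin.sum_ite_val_eq, ← Fin.sum_ite_val_eq, ← Finset.sum_add_distrib]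
  refine Finset.sum_congr rfl fun j _ => ?_
  split_ifs <;> first | omega | simp

theorem Real.sqrt_two_pow_sq (k : ℕ) : (√2 ^ k) ^ 2 = 2 ^ k := by
  rw [← pow_mul, mul_comm, pow_mul, Real.sq_sqrt zero_le_two]

namespace spider

variable {ℓ : ℕ}

theorem adj_none_some (i : Fin 3) (j : Fin ℓ) :
    (spider ℓ).Adj none (some (i, j)) ↔ (j : ℕ) = 0 := by
  simp [spider]

theorem adj_some_none (i : Fin 3) (j : Fin ℓ) :
    (spider ℓ).Adj (some (i, j)) none ↔ (j : ℕ) = 0 := by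
  simp [spider]

theorem adj_some_some (i i' : Fin 3) (j j' : Fin ℓ) :
    (spider ℓ).Adj (some (i, j)) (some (i', j')) ↔
      i' = i ∧ ((j' : ℕ) = j + 1 ∨ (j' : ℕ) + 1 = j) := by
  simp only [spider, SimpleGraph.fromRel_adj, ne_eq, Option.some.injEq, Prod.ext_iff, Fin.ext_iff]
  omega

def radial (f : ℕ → ℝ) : Option (Fin 3 × Fin ℓ) → ℝ
  | none => f 0
  | some (_, j) => f (j + 1)

theorem mulVec_radial_none (hℓ : 1 ≤ ℓ) (f : ℕ → ℝ) :
    (adjMat (spider ℓ) *ᵥ radial f) none = 3 * f 1 := by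
  simp [adjMat_mulVec_apply, Fintype.sum_option, Fintype.sum_prod_type, adj_none_some, radial,
    Fin.sum_ite_val_eq ℓ 0 (fun n => f (n + 1)), Nat.one_le_iff_ne_zero.mp hℓ]

theorem mulVec_radial_some (f : ℕ → ℝ) (i : Fin 3) (j : Fin ℓ) :
    (adjMat (spider ℓ) *ᵥ radial f) (some (i, j)) =
      f j + if (j : ℕ) + 1 < ℓ then f (j + 2) else 0 := by
  simp only [adjMat_mulVec_apply, Fintype.sum_option, Fintype.sum_prod_type, adj_some_some,
    adj_some_none, radial, ite_and]
  rcases j with ⟨_ | m, hm⟩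
  · simp [Fin.sum_ite_val_eq ℓ 1 (fun n => f (n + 1))]
  · simp only [Nat.add_eq_zero_iff, one_ne_zero, and_false, ↓reduceIte, Nat.add_right_cancel_iff,
      Finset.sum_ite_irrel, Fin.sum_ite_val_eq_or ℓ (m + 2) m (by omega) (fun n => f (n + 1)),
      Finset.sum_const_zero, Finset.sum_ite_eq', Finset.mem_univ, zero_add]
    rw [if_pos (by omega : m < ℓ), add_comm]

noncomputable def testSeq (ε : ℝ) (k : ℕ) : ℝ :=
  (√2)⁻¹ ^ k - ε * √2 ^ k + ε

theorem testSeq_add_testSeq_add_two (ε : ℝ) (k : ℕ) :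
    testSeq ε k + testSeq ε (k + 2) = 3 / √2 * testSeq ε (k + 1) + (2 - 3 / √2) * ε := by
  simp only [testSeq, pow_succ]
  field_simp
  linear_combination ((√2)⁻¹ ^ k - √2 ^ 2 * √2 ^ k * ε) * Real.sq_sqrt zero_le_two

theorem three_mul_testSeq_one (ε : ℝ) :
    3 * testSeq ε 1 = 3 / √2 * testSeq ε 0 - 3 * (√2 - 1) * ε := by
  simp only [testSeq, pow_one, pow_zero]
  field_simp
  ring

theorem testSeq_eq_of_mul_two_pow_eq_one {ε : ℝ} {k : ℕ} (h : ε * 2 ^ k = 1) :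
    testSeq ε k = ε := by
  have : √2 ^ k ≠ 0 := by positivity
  simp only [testSeq, inv_pow]
  field_simp
  linear_combination (-1) * h - ε * Real.sqrt_two_pow_sq k

theorem testSeq_pos {ε : ℝ} {k : ℕ} (hε : 0 < ε) (h : ε * 2 ^ k ≤ 1) : 0 < testSeq ε k := by
  have hpos : 0 < √2 ^ k := by positivity
  have : ε * √2 ^ k ≤ (√2)⁻¹ ^ k := by
    rw [inv_pow, ← one_div, le_div_iff₀ hpos]
    linear_combination h + ε * Real.sqrt_two_pow_sq k
  unfold testSeq; linarith

noncomputable def testVec (ℓ : ℕ) : Option (Fin 3 × Fin ℓ) → ℝ :=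
  radial (testSeq (2 ^ (ℓ + 1))⁻¹)

theorem testVec_pos (v : Option (Fin 3 × Fin ℓ)) : 0 < testVec ℓ v := by
  have hk : ∀ k ≤ ℓ + 1, 0 < testSeq (2 ^ (ℓ + 1))⁻¹ k := fun k hk =>
    testSeq_pos (by positivity) (inv_mul_le_one_of_le₀ (pow_le_pow_right₀ one_le_two hk)
      (by positivity))
  rcases v with _ | ⟨i, j⟩
  · exact hk 0 (Nat.zero_le _)
  · exact hk (j + 1) (by omega)

theorem mulVec_testVec_lt (hℓ : 1 ≤ ℓ) (v : Option (Fin 3 × Fin ℓ)) :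
    (adjMat (spider ℓ) *ᵥ testVec ℓ) v < 3 / √2 * testVec ℓ v := by
  set ε : ℝ := (2 ^ (ℓ + 1))⁻¹
  have hε : 0 < ε := by positivity
  have hμ : 2 < 3 / √2 := by
    rw [lt_div_iff₀ (by positivity)]
    nlinarith [Real.sq_sqrt zero_le_two, Real.sqrt_nonneg 2]
  have hgap : (2 - 3 / √2) * ε < 0 := mul_neg_of_neg_of_pos (by linarith) hε
  rcases v with _ | ⟨i, j⟩
  · have := mul_pos (sub_pos.2 Real.one_lt_sqrt_two) hε
    rw [testVec, mulVec_radial_none hℓ, three_mul_testSeq_one]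
    simp only [radial]
    linarith
  · rw [testVec, mulVec_radial_some]
    simp only [radial]
    have hrec := testSeq_add_testSeq_add_two ε j
    split_ifs with hj
    · linarith
    · have hend : testSeq ε (j + 2) = ε := testSeq_eq_of_mul_two_pow_eq_one <| by
        rw [show (j : ℕ) + 2 = ℓ + 1 by omega]; exact inv_mul_cancel₀ (by positivity)
      linarith

end spider

/-- `λ₁(T(ℓ,ℓ,ℓ)) < 3/√2` for every `ℓ ≥ 1`. -/
theorem spider_eig_lt :
    ∀ ℓ : ℕ, 1 ≤ ℓ → graphEig (spider ℓ) 1 < 3 / Real.sqrt 2 :=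
  fun _ hℓ => eig_lt_of_mulVec_lt (adjMat_nonneg _) spider.testVec_pos
    (spider.mulVec_testVec_lt hℓ) 1
end

section
/- For all integers p,q ≥ 3, the graph D(p,q) consisting of two cycles of lengths p and q sharing exactly one vertex has largest adjacency eigenvalue at least 3/√2. -/
open scoped Classical

/-- Figure-eight graph `D(p,q)`: two cycles of lengths `p` and `q` sharing exactly the
vertex `none`. -/
def figureEight (p q : ℕ) : SimpleGraph (Option (Fin (p - 1) ⊕ Fin (q - 1))) :=
  SimpleGraph.fromRel fun u v =>
    match u, v with
    | none, some (Sum.inl i) => (i : ℕ) = 0 ∨ (i : ℕ) = p - 2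
    | none, some (Sum.inr i) => (i : ℕ) = 0 ∨ (i : ℕ) = q - 2
    | some (Sum.inl i), some (Sum.inl j) => (j : ℕ) = (i : ℕ) + 1
    | some (Sum.inr i), some (Sum.inr j) => (j : ℕ) = (i : ℕ) + 1
    | _, _ => False

/-!
A nonnegative vector `x` with `A x ≥ r x` entrywise gives `r ≤ λ₁(A)` for symmetric `A`, since
`r ‖x‖² ≤ xᵀ A x ≤ λ₁ ‖x‖²` by the spectral theorem. On `D(p,q)` put `20` on the common vertex,
`11` on its four neighbours, `5` on the vertices at distance two and `0` elsewhere: then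
`A x ≥ (11/5) x`, because `4 · 11 = (11/5) · 20`, `20 + 5 ≥ (11/5) · 11` and `11 = (11/5) · 5`
(on a cycle of length `3` or `4` these vertex classes overlap, which only increases the neighbour
sums). Finally `11/5 ≥ 3/√2`. The weights `20 : 11 : 5` approximate the Perron vector `4 : √5 : 1`
of the tree with four legs of length two.
-/

open Matrix

section Spectral

variable {n : Type*} [Fintype n] [DecidableEq n]

lemma le_eig_one_of_mem_roots {A : Matrix n n ℝ} {a : ℝ} (ha : a ∈ A.charpoly.roots) :
    a ≤ eig A 1 := by
  have hsorted : (eigList A).Pairwise (· ≤ ·) := Multiset.pairwise_sort _ _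
  obtain ⟨i, hi, rfl⟩ := List.getElem_of_mem (by rwa [eigList, Multiset.mem_sort] : a ∈ eigList A)
  rw [eig, List.getD_eq_getElem _ _ (by omega)]
  rcases (Nat.le_sub_one_of_lt hi).lt_or_eq with h | h
  · exact List.pairwise_iff_getElem.mp hsorted _ _ _ _ h
  · simp only [h, le_refl]

lemma Matrix.IsHermitian.dotProduct_mulVec_le_eig_one {A : Matrix n n ℝ} (hA : A.IsHermitian)
    (x : n → ℝ) : x ⬝ᵥ (A *ᵥ x) ≤ eig A 1 * (x ⬝ᵥ x) := by
  set U : Matrix n n ℝ := (hA.eigenvectorUnitary : Matrix n n ℝ)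
  set y := Uᵀ *ᵥ x
  have hUUt : U * Uᵀ = 1 := by
    simpa [U, star_eq_conjTranspose] using Unitary.mul_star_self_of_mem hA.eigenvectorUnitary.2
  have hA' : A = U * diagonal hA.eigenvalues * Uᵀ := by
    simpa [U, Unitary.conjStarAlgAut_apply, star_eq_conjTranspose] using hA.spectral_theorem
  have hnorm : x ⬝ᵥ x = y ⬝ᵥ y := by
    rw [dotProduct_mulVec, vecMul_transpose, mulVec_mulVec, hUUt, one_mulVec, dotProduct_comm]
  have hquad : x ⬝ᵥ (A *ᵥ x) = ∑ i, hA.eigenvalues i * y i ^ 2 := by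
    conv_lhs => rw [hA', ← mulVec_mulVec, ← mulVec_mulVec, dotProduct_mulVec, ← mulVec_transpose]
    simp only [dotProduct, mulVec_diagonal, y]
    exact Finset.sum_congr rfl fun i _ => by ring
  have heig (i : n) : hA.eigenvalues i ≤ eig A 1 :=
    le_eig_one_of_mem_roots (by simp [hA.roots_charpoly_eq_eigenvalues])
  calc x ⬝ᵥ (A *ᵥ x) = ∑ i, hA.eigenvalues i * y i ^ 2 := hquad
    _ ≤ ∑ i, eig A 1 * y i ^ 2 := by gcongr with i; exact heig i
    _ = eig A 1 * (x ⬝ᵥ x) := by rw [hnorm, dotProduct, Finset.mul_sum]; simp only [sq]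

lemma Matrix.IsHermitian.le_eig_one_of_smul_le_mulVec {A : Matrix n n ℝ} (hA : A.IsHermitian)
    {x : n → ℝ} (hx : 0 ≤ x) (hx0 : x ≠ 0) {r : ℝ} (hr : r • x ≤ A *ᵥ x) : r ≤ eig A 1 := by
  have hpos : 0 < x ⬝ᵥ x :=
    (dotProduct_nonneg_of_nonneg hx hx).lt_of_ne' (dotProduct_self_eq_zero.not.mpr hx0)
  refine le_of_mul_le_mul_right ?_ hpos
  calc r * (x ⬝ᵥ x) = x ⬝ᵥ (r • x) := by rw [dotProduct_smul, smul_eq_mul]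
    _ ≤ x ⬝ᵥ (A *ᵥ x) := dotProduct_le_dotProduct_of_nonneg_left hr hx
    _ ≤ eig A 1 * (x ⬝ᵥ x) := hA.dotProduct_mulVec_le_eig_one x

end Spectral

section AdjMat

variable {V : Type*} [Fintype V] [DecidableEq V] {G : SimpleGraph V}

lemma adjMat_isHermitian (G : SimpleGraph V) : (adjMat G).IsHermitian :=
  isHermitian_iff_isSymm.mpr (G.isSymm_adjMatrix (α := ℝ))

lemma sum_le_adjMat_mulVec {x : V → ℝ} (hx : 0 ≤ x) {u : V} {s : Finset V}
    (hs : ∀ v ∈ s, G.Adj u v) : ∑ v ∈ s, x v ≤ (adjMat G *ᵥ x) u := by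
  rw [show adjMat G = G.adjMatrix ℝ from rfl, G.adjMatrix_mulVec_apply]
  exact Finset.sum_le_sum_of_subset_of_nonneg (fun v hv => by simpa using hs v hv)
    fun v _ _ => hx v

end AdjMat

def cycleWeight (m i : ℕ) : ℝ :=
  if i = 0 ∨ i = m - 2 then 11 else if i = 1 ∨ i = m - 3 then 5 else 0

lemma cycleWeight_nonneg (m i : ℕ) : 0 ≤ cycleWeight m i := by
  unfold cycleWeight; split_ifs <;> norm_num

lemma five_le_cycleWeight {m i : ℕ} (h : i = 1 ∨ i = m - 3) : 5 ≤ cycleWeight m i := by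
  unfold cycleWeight; split_ifs <;> norm_num

/-- `c, ι 0, …, ι (m - 2)` are the successive vertices of a cycle of length `m` in `G`. -/
structure IsRootedCycle {V : Type*} (G : SimpleGraph V) (c : V) {m : ℕ} (ι : Fin (m - 1) → V) :
    Prop where
  injective : Function.Injective ι
  ne_root (i : Fin (m - 1)) : ι i ≠ c
  adj_root (i : Fin (m - 1)) : (i : ℕ) = 0 ∨ (i : ℕ) = m - 2 → G.Adj c (ι i)
  adj_succ (i j : Fin (m - 1)) : (j : ℕ) = i + 1 → G.Adj (ι i) (ι j)

namespace IsRootedCycle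

variable {V : Type*} [DecidableEq V] {G : SimpleGraph V} {c : V} {m : ℕ} {ι : Fin (m - 1) → V}
  {x : V → ℝ}

lemma exists_root_neighbors (hC : IsRootedCycle G c ι) (hm : 3 ≤ m)
    (hxι : ∀ i, x (ι i) = cycleWeight m i) :
    ∃ s : Finset V, (∀ v ∈ s, G.Adj c v) ∧ (∀ v ∈ s, v ∈ Set.range ι) ∧ ∑ v ∈ s, x v = 22 := by
  have hne : ι ⟨0, by omega⟩ ≠ ι ⟨m - 2, by omega⟩ :=
    hC.injective.ne (Fin.ne_of_val_ne (by dsimp only; omega))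
  refine ⟨{ι ⟨0, by omega⟩, ι ⟨m - 2, by omega⟩}, ?_, by simp, ?_⟩
  · simp [hC.adj_root]
  · rw [Finset.sum_pair hne, hxι, hxι]
    norm_num [cycleWeight]

variable [Fintype V]

lemma smul_le_mulVec_root {n : ℕ} {κ : Fin (n - 1) → V} (hι : IsRootedCycle G c ι)
    (hκ : IsRootedCycle G c κ) (hm : 3 ≤ m) (hn : 3 ≤ n) (hικ : ∀ i j, ι i ≠ κ j) (hx : 0 ≤ x)
    (hxc : x c = 20) (hxι : ∀ i, x (ι i) = cycleWeight m i)
    (hxκ : ∀ j, x (κ j) = cycleWeight n j) : 11 / 5 * x c ≤ (adjMat G *ᵥ x) c := by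
  obtain ⟨s, hsc, hsι, hs⟩ := hι.exists_root_neighbors hm hxι
  obtain ⟨t, htc, htκ, ht⟩ := hκ.exists_root_neighbors hn hxκ
  have hst : Disjoint s t := Finset.disjoint_left.mpr fun v hvs hvt => by
    obtain ⟨i, rfl⟩ := hsι v hvs
    obtain ⟨j, hj⟩ := htκ _ hvt
    exact hικ i j hj.symm
  have h := sum_le_adjMat_mulVec hx (u := c) (s := s ∪ t)
    (by simpa [or_imp, forall_and] using ⟨hsc, htc⟩)
  rw [Finset.sum_union hst, hs, ht] at h
  rw [hxc]
  linarith

lemma smul_le_mulVec (hC : IsRootedCycle G c ι) (hm : 3 ≤ m) (hx : 0 ≤ x) (hxc : x c = 20)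
    (hxι : ∀ i, x (ι i) = cycleWeight m i) (i : Fin (m - 1)) :
    11 / 5 * x (ι i) ≤ (adjMat G *ᵥ x) (ι i) := by
  rw [hxι]
  by_cases hend : (i : ℕ) = 0 ∨ (i : ℕ) = m - 2
  · obtain ⟨j, hij, hj⟩ : ∃ j, G.Adj (ι i) (ι j) ∧ 5 ≤ cycleWeight m j := by
      rcases hend with h | h
      · exact ⟨⟨1, by omega⟩, hC.adj_succ _ _ (by dsimp only; omega),
          five_le_cycleWeight (.inl rfl)⟩
      · exact ⟨⟨m - 3, by omega⟩, (hC.adj_succ _ _ (by dsimp only; omega)).symm,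
          five_le_cycleWeight (.inr rfl)⟩
    have h := sum_le_adjMat_mulVec (G := G) hx (u := ι i) (s := {c, ι j})
      (by simp [(hC.adj_root i hend).symm, hij])
    rw [Finset.sum_pair (hC.ne_root j).symm, hxc, hxι] at h
    rw [cycleWeight, if_pos hend]
    linarith
  by_cases hnext : (i : ℕ) = 1 ∨ (i : ℕ) = m - 3
  · obtain ⟨j, hij, hj⟩ : ∃ j, G.Adj (ι i) (ι j) ∧ cycleWeight m j = 11 := by
      rcases hnext with h | h
      · exact ⟨⟨0, by omega⟩, (hC.adj_succ _ _ (by dsimp only; omega)).symm, by simp [cycleWeight]⟩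
      · exact ⟨⟨m - 2, by omega⟩, hC.adj_succ _ _ (by dsimp only; omega), by simp [cycleWeight]⟩
    have h := sum_le_adjMat_mulVec (G := G) hx (u := ι i) (s := {ι j}) (by simpa using hij)
    rw [Finset.sum_singleton, hxι, hj] at h
    rw [cycleWeight, if_neg hend, if_pos hnext]
    linarith
  · rw [cycleWeight, if_neg hend, if_neg hnext, mul_zero]
    simpa using sum_le_adjMat_mulVec hx (u := ι i) (s := ∅) (by simp)

end IsRootedCycle

section FigureEight

variable {p q : ℕ}

lemma isRootedCycle_figureEight_inl :
    IsRootedCycle (figureEight p q) none fun i : Fin (p - 1) => some (Sum.inl i) where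
  injective _ _ h := by simpa using h
  ne_root := by simp
  adj_root i h := by simp [figureEight, h]
  adj_succ i j h := by simp [figureEight, h, Fin.ext_iff]

lemma isRootedCycle_figureEight_inr :
    IsRootedCycle (figureEight p q) none fun j : Fin (q - 1) => some (Sum.inr j) where
  injective _ _ h := by simpa using h
  ne_root := by simp
  adj_root i h := by simp [figureEight, h]
  adj_succ i j h := by simp [figureEight, h, Fin.ext_iff]

def figureEightWeight (p q : ℕ) : Option (Fin (p - 1) ⊕ Fin (q - 1)) → ℝ
  | none => 20
  | some (Sum.inl i) => cycleWeight p i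
  | some (Sum.inr j) => cycleWeight q j

lemma figureEightWeight_nonneg : 0 ≤ figureEightWeight p q := by
  rintro (_ | i | j) <;> simp [figureEightWeight, cycleWeight_nonneg]

lemma smul_figureEightWeight_le_mulVec (hp : 3 ≤ p) (hq : 3 ≤ q) :
    (11 / 5 : ℝ) • figureEightWeight p q ≤ adjMat (figureEight p q) *ᵥ figureEightWeight p q := by
  have hι := isRootedCycle_figureEight_inl (p := p) (q := q)
  have hκ := isRootedCycle_figureEight_inr (p := p) (q := q)
  rintro (_ | i | j)
  · exact hι.smul_le_mulVec_root hκ hp hq (by simp) figureEightWeight_nonneg rfl (fun _ => rfl)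
      fun _ => rfl
  · exact hι.smul_le_mulVec hp figureEightWeight_nonneg rfl (fun _ => rfl) i
  · exact hκ.smul_le_mulVec hq figureEightWeight_nonneg rfl (fun _ => rfl) j

end FigureEight

lemma three_div_sqrt_two_le : 3 / Real.sqrt 2 ≤ 11 / 5 := by
  rw [div_le_iff₀ (by positivity)]
  nlinarith [Real.sq_sqrt (show (0 : ℝ) ≤ 2 by norm_num), Real.sqrt_nonneg 2]

/-- For `p,q ≥ 3`, the figure-eight graph `D(p,q)` satisfies
`λ₁(D(p,q)) ≥ 3/√2`. -/
theorem figureEight_eig_ge (p q : ℕ) (hp : 3 ≤ p) (hq : 3 ≤ q) :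
    3 / Real.sqrt 2 ≤ graphEig (figureEight p q) 1 :=
  three_div_sqrt_two_le.trans <|
    (adjMat_isHermitian _).le_eig_one_of_smul_le_mulVec figureEightWeight_nonneg
      (fun h => by simpa [figureEightWeight] using congr_fun h none)
      (smul_figureEightWeight_le_mulVec hp hq)
end

section
/- Let G be a graph on N vertices such that λ = λ₁(G) is the largest adjacency eigenvalue and λI − A_G + (1/2)J is positive semidefinite with rank at most d, where J is the all-ones matrix. If exactly j connected components of G have largest eigenvalue equal to λ, then rank(λI − A_G) ≤ d − 1 and N ≤ d − 1 + j. -/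
open scoped Classical

/-! Write `B = λI - A_G` and `J` for the all-ones matrix. As `λ` is the top eigenvalue, `B` is
positive semidefinite, so `ker (B + J/2) = ker B ∩ ker J`. The absolute value of a top
eigenvector is a nonnegative vector in `ker B` outside `ker J`, whence
`rank B < rank (B + J/2) ≤ d`. A vector of `ker B` vanishes on every component whose top
eigenvalue is below `λ`, and on each of the other components its absolute value is a nonnegative
`λ`-eigenvector, which vanishes on the whole component as soon as it vanishes at one vertex. So a
vector of `ker B` is determined by its values at one vertex of each of the `j` top components,
`dim ker B ≤ j`, and rank–nullity gives `N ≤ d - 1 + j`. -/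

namespace Matrix

variable {V : Type*} [Fintype V]

lemma rank_add_finrank_ker (A : Matrix V V ℝ) :
    A.rank + Module.finrank ℝ (LinearMap.ker A.mulVecLin) = Fintype.card V := by
  have := LinearMap.finrank_range_add_finrank_ker A.mulVecLin
  rwa [Module.finrank_pi] at this

lemma PosSemidef.rank_lt_rank_add {B C : Matrix V V ℝ} (hB : B.PosSemidef) (hC : C.PosSemidef)
    {y : V → ℝ} (hBy : B *ᵥ y = 0) (hCy : C *ᵥ y ≠ 0) : B.rank < (B + C).rank := by
  have hle : LinearMap.ker (B + C).mulVecLin ≤ LinearMap.ker B.mulVecLin := by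
    intro x hx
    simp only [LinearMap.mem_ker, mulVecLin_apply, add_mulVec] at hx ⊢
    have hsum : star x ⬝ᵥ (B *ᵥ x) + star x ⬝ᵥ (C *ᵥ x) = 0 := by
      rw [← dotProduct_add, hx, dotProduct_zero]
    rw [← hB.dotProduct_mulVec_zero_iff]
    linarith [hB.dotProduct_mulVec_nonneg x, hC.dotProduct_mulVec_nonneg x]
  have hlt : LinearMap.ker (B + C).mulVecLin < LinearMap.ker B.mulVecLin :=
    lt_of_le_of_ne hle fun h => hCy <| by
      have hy : y ∈ LinearMap.ker (B + C).mulVecLin := h ▸ hBy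
      simpa [hBy] using hy
  have := Submodule.finrank_lt_finrank_of_lt hlt
  have := rank_add_finrank_ker B
  have := rank_add_finrank_ker (B + C)
  omega

lemma posSemidef_of_const_one : (of fun _ _ : V => (1 : ℝ)).PosSemidef := by
  convert posSemidef_vecMulVec_self_star (1 : V → ℝ)
  ext u v
  simp

lemma of_const_one_mulVec_ne_zero {x : V → ℝ} (hx0 : x ≠ 0) (hnn : 0 ≤ x) :
    (of fun _ _ : V => (1 : ℝ)) *ᵥ x ≠ 0 := by
  obtain ⟨v, hv⟩ := Function.ne_iff.mp hx0
  have hpos : 0 < ∑ u, x u :=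
    Finset.sum_pos' (fun u _ => hnn u) ⟨v, Finset.mem_univ v, (hnn v).lt_of_ne' hv⟩
  intro h
  have := congrFun h v
  simp only [mulVec, dotProduct, of_apply, one_mul, Pi.zero_apply] at this
  linarith

variable [DecidableEq V]

lemma smul_one_sub_mulVec_eq_zero_iff {A : Matrix V V ℝ} {μ : ℝ} {x : V → ℝ} :
    (μ • (1 : Matrix V V ℝ) - A) *ᵥ x = 0 ↔ A *ᵥ x = μ • x := by
  rw [sub_mulVec, smul_mulVec, one_mulVec, sub_eq_zero, eq_comm]

lemma mem_roots_charpoly_iff {A : Matrix V V ℝ} {μ : ℝ} :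
    μ ∈ A.charpoly.roots ↔ ∃ x, x ≠ 0 ∧ A *ᵥ x = μ • x := by
  rw [Polynomial.mem_roots A.charpoly_monic.ne_zero, Polynomial.IsRoot.def, eval_charpoly,
    ← exists_mulVec_eq_zero_iff, scalar_apply, ← smul_one_eq_diagonal]
  simp only [smul_one_sub_mulVec_eq_zero_iff]

lemma le_eig_one_of_mem_roots_charpoly {A : Matrix V V ℝ} {μ : ℝ}
    (h : μ ∈ A.charpoly.roots) : μ ≤ eig A 1 := by
  have hμ : μ ∈ eigList A := by rwa [eigList, Multiset.mem_sort]
  obtain ⟨i, hi, rfl⟩ := List.mem_iff_getElem.mp hμ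
  rw [eig, List.getD_eq_getElem _ _ (by omega)]
  exact (Multiset.pairwise_sort A.charpoly.roots (· ≤ ·)).rel_get_of_le
    (show (⟨i, hi⟩ : Fin _) ≤ ⟨_, _⟩ by simp only [Fin.mk_le_mk]; omega)

lemma eig_one_mem_roots_charpoly {A : Matrix V V ℝ} (h : A.charpoly.roots ≠ 0) :
    eig A 1 ∈ A.charpoly.roots := by
  have hlen : 0 < (eigList A).length := by simpa [eigList, Multiset.card_pos] using h
  rw [← Multiset.mem_sort (· ≤ ·), ← eigList, eig, List.getD_eq_getElem _ _ (by omega)]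
  exact List.getElem_mem _

lemma IsHermitian.roots_charpoly_ne_zero [Nonempty V] {A : Matrix V V ℝ} (hA : A.IsHermitian) :
    A.charpoly.roots ≠ 0 := by
  simp [hA.roots_charpoly_eq_eigenvalues, Finset.univ_nonempty.ne_empty]

lemma IsHermitian.exists_mulVec_eq_eig_one [Nonempty V] {A : Matrix V V ℝ}
    (hA : A.IsHermitian) : ∃ x, x ≠ 0 ∧ A *ᵥ x = eig A 1 • x :=
  mem_roots_charpoly_iff.mp (eig_one_mem_roots_charpoly hA.roots_charpoly_ne_zero)

lemma IsHermitian.posSemidef_eig_one_smul_one_sub {A : Matrix V V ℝ} (hA : A.IsHermitian) :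
    (eig A 1 • (1 : Matrix V V ℝ) - A).PosSemidef := by
  have hB : (eig A 1 • (1 : Matrix V V ℝ) - A).IsHermitian :=
    (isHermitian_one.smul (IsSelfAdjoint.all _)).sub hA
  refine hB.posSemidef_iff_eigenvalues_nonneg.mpr fun i => ?_
  set w : V → ℝ := ⇑(hB.eigenvectorBasis i)
  have hw0 : w ≠ 0 := (WithLp.ofLp_eq_zero 2).not.mpr (hB.eigenvectorBasis.orthonormal.ne_zero i)
  have hAw : A *ᵥ w = (eig A 1 - hB.eigenvalues i) • w := by
    have := hB.mulVec_eigenvectorBasis i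
    rw [sub_mulVec, smul_mulVec, one_mulVec] at this
    rw [sub_smul, ← this, sub_sub_cancel]
  have := le_eig_one_of_mem_roots_charpoly (mem_roots_charpoly_iff.mpr ⟨w, hw0, hAw⟩)
  simp only [Pi.zero_apply]
  linarith

lemma mulVec_abs_eq_of_posSemidef {A : Matrix V V ℝ} (hA : ∀ u v, 0 ≤ A u v) {μ : ℝ}
    (hpsd : (μ • (1 : Matrix V V ℝ) - A).PosSemidef) {x : V → ℝ} (hx : A *ᵥ x = μ • x) :
    A *ᵥ |x| = μ • |x| := by
  -- `|x|` has Rayleigh quotient at least that of `x`, which is already the maximum `μ`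
  rw [← smul_one_sub_mulVec_eq_zero_iff, ← hpsd.dotProduct_mulVec_zero_iff, star_trivial]
  have hquad : ∀ y : V → ℝ, y ⬝ᵥ ((μ • (1 : Matrix V V ℝ) - A) *ᵥ y)
      = μ * (y ⬝ᵥ y) - y ⬝ᵥ (A *ᵥ y) := fun y => by
    rw [sub_mulVec, smul_mulVec, one_mulVec, dotProduct_sub, dotProduct_smul, smul_eq_mul]
  have hnorm : |x| ⬝ᵥ |x| = x ⬝ᵥ x := by simp [dotProduct, abs_mul_abs_self]
  have hA_abs : x ⬝ᵥ (A *ᵥ x) ≤ |x| ⬝ᵥ (A *ᵥ |x|) := by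
    simp only [dotProduct, mulVec, Finset.mul_sum]
    refine Finset.sum_le_sum fun u _ => Finset.sum_le_sum fun v _ => ?_
    calc x u * (A u v * x v) ≤ |x u * (A u v * x v)| := le_abs_self _
      _ = |x| u * (A u v * |x| v) := by simp [abs_mul, abs_of_nonneg (hA u v)]
  have hx0 : x ⬝ᵥ ((μ • (1 : Matrix V V ℝ) - A) *ᵥ x) = 0 := by
    rw [smul_one_sub_mulVec_eq_zero_iff.mpr hx, dotProduct_zero]
  have hnonneg := hpsd.dotProduct_mulVec_nonneg |x|
  rw [star_trivial, hquad, hnorm] at hnonneg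
  rw [hquad] at hx0
  rw [hquad, hnorm]
  linarith

end Matrix

namespace SimpleGraph

open Matrix

variable {V : Type*} [Fintype V] [DecidableEq V] (G : SimpleGraph V)

lemma adjMat_isHermitian : (adjMat G).IsHermitian := by
  ext u v
  simp [adjMat, G.adj_comm]

lemma adjMat_nonneg (u v : V) : 0 ≤ adjMat G u v := by
  by_cases h : G.Adj u v <;> simp [adjMat, h]

lemma adjMat_eq_zero_of_not_adj {u v : V} (h : ¬G.Adj u v) : adjMat G u v = 0 := by
  simp [adjMat, h]

variable {G}

lemma eq_zero_of_reachable_of_nonneg {μ : ℝ} {x : V → ℝ} (hx : adjMat G *ᵥ x = μ • x)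
    (hnn : 0 ≤ x) {u v : V} (hu : x u = 0) (h : G.Reachable u v) : x v = 0 := by
  obtain ⟨p⟩ := h
  induction p with
  | nil => exact hu
  | @cons a b _ hab _ ih =>
    refine ih ?_
    have hsum : ∑ w, adjMat G a w * x w = 0 := by
      simpa [mulVec, dotProduct, hu] using congrFun hx a
    have := (Finset.sum_eq_zero_iff_of_nonneg fun w _ =>
      mul_nonneg (adjMat_nonneg G a w) (hnn w)).mp hsum b (Finset.mem_univ b)
    simpa [adjMat, hab] using this

lemma adjMat_mulVec_indicator_supp (c : G.ConnectedComponent) (x : V → ℝ) :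
    adjMat G *ᵥ c.supp.indicator x = c.supp.indicator (adjMat G *ᵥ x) := by
  ext v
  simp only [mulVec, dotProduct, Set.indicator_apply, mul_ite, mul_zero]
  split_ifs with hv
  · refine Finset.sum_congr rfl fun u _ => ?_
    split_ifs with hu
    · rfl
    · rw [adjMat_eq_zero_of_not_adj G fun h => hu (c.mem_supp_of_adj_mem_supp hv h), zero_mul]
  · refine Finset.sum_eq_zero fun u _ => ?_
    split_ifs with hu
    · rw [adjMat_eq_zero_of_not_adj G fun h => hv (c.mem_supp_of_adj_mem_supp hu h.symm),
        zero_mul]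
    · rfl

lemma adjMat_induce_mulVec_apply (s : Set V) [Fintype s] [DecidableEq s] (x : V → ℝ) (v : s) :
    (adjMat (G.induce s) *ᵥ fun u => x u) v = (adjMat G *ᵥ s.indicator x) v := by
  have hsum := Finset.sum_indicator_subset (fun u => adjMat G v u * x u)
    (Finset.subset_univ s.toFinset)
  rw [Set.coe_toFinset, Finset.sum_subtype s.toFinset (fun _ => Set.mem_toFinset)] at hsum
  simp only [mulVec, dotProduct, ← Set.indicator_mul_right, hsum]
  rfl

lemma le_graphEig_induce_supp {c : G.ConnectedComponent} {μ : ℝ} {x : V → ℝ}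
    (hx : adjMat G *ᵥ x = μ • x) (hsupp : c.supp.indicator x = x) (hx0 : x ≠ 0) :
    μ ≤ graphEig (G.induce c.supp) 1 := by
  refine le_eig_one_of_mem_roots_charpoly (mem_roots_charpoly_iff.mpr ⟨fun u => x u, ?_, ?_⟩)
  · refine fun h => hx0 (hsupp ▸ ?_)
    ext v
    by_cases hv : v ∈ c.supp
    · simpa [hv] using congrFun h ⟨v, hv⟩
    · simp [hv]
  · ext v
    rw [adjMat_induce_mulVec_apply, hsupp, hx]
    rfl

lemma graphEig_induce_supp_le (c : G.ConnectedComponent) :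
    graphEig (G.induce c.supp) 1 ≤ graphEig G 1 := by
  have : Nonempty c.supp := c.nonempty_supp.to_subtype
  obtain ⟨w, hw0, hw⟩ := (adjMat_isHermitian (G.induce c.supp)).exists_mulVec_eq_eig_one
  let x : V → ℝ := fun v => if h : v ∈ c.supp then w ⟨v, h⟩ else 0
  have hxw : (fun u : c.supp => x u) = w := funext fun u => dif_pos u.2
  have hsupp : c.supp.indicator x = x := by
    ext v
    by_cases hv : v ∈ c.supp
    · rw [Set.indicator_of_mem hv]
    · rw [Set.indicator_of_notMem hv]
      exact (dif_neg hv : x v = 0).symm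
  refine le_eig_one_of_mem_roots_charpoly (mem_roots_charpoly_iff.mpr ⟨x, ?_, ?_⟩)
  · exact fun h => hw0 (by rw [← hxw, h]; rfl)
  · ext v
    by_cases hv : v ∈ c.supp
    · have := congrFun hw ⟨v, hv⟩
      rw [← hxw, adjMat_induce_mulVec_apply, hsupp] at this
      rw [this, Pi.smul_apply, Pi.smul_apply, show x v = w ⟨v, hv⟩ from dif_pos hv]
      rfl
    · rw [← hsupp, adjMat_mulVec_indicator_supp]
      simp [x, hv]

lemma eq_zero_of_apply_out_eq_zero {x : V → ℝ} (hx : adjMat G *ᵥ x = graphEig G 1 • x)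
    (h : ∀ c : G.ConnectedComponent,
      graphEig (G.induce c.supp) 1 = graphEig G 1 → x c.out = 0) :
    x = 0 := by
  ext v
  set c := G.connectedComponentMk v
  by_cases hc : graphEig (G.induce c.supp) 1 = graphEig G 1
  · have habs := mulVec_abs_eq_of_posSemidef (adjMat_nonneg G)
      (adjMat_isHermitian G).posSemidef_eig_one_smul_one_sub hx
    have : |x| v = 0 := eq_zero_of_reachable_of_nonneg habs (abs_nonneg x)
      (by simp [h c hc]) (ConnectedComponent.exact c.out_eq)
    simpa using this
  · have hy : adjMat G *ᵥ c.supp.indicator x = graphEig G 1 • c.supp.indicator x := by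
      rw [adjMat_mulVec_indicator_supp, hx]
      exact Set.indicator_const_smul c.supp (graphEig G 1) x
    by_contra hne
    have hy0 : c.supp.indicator x ≠ 0 := fun h0 => hne (by simpa [c] using congrFun h0 v)
    exact hc (le_antisymm (graphEig_induce_supp_le c)
      (le_graphEig_induce_supp hy (by rw [Set.indicator_indicator, Set.inter_self]) hy0))

theorem finrank_ker_graphEig_one_smul_one_sub_adjMat_le :
    Module.finrank ℝ (LinearMap.ker ((graphEig G 1 • (1 : Matrix V V ℝ) - adjMat G).mulVecLin))
      ≤ Nat.card {c : G.ConnectedComponent // graphEig (G.induce c.supp) 1 = graphEig G 1} := by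
  let Φ := (LinearMap.pi fun c : {c : G.ConnectedComponent //
      graphEig (G.induce c.supp) 1 = graphEig G 1} => LinearMap.proj (R := ℝ) c.1.out).comp
    (LinearMap.ker ((graphEig G 1 • (1 : Matrix V V ℝ) - adjMat G).mulVecLin)).subtype
  have hΦ : Function.Injective Φ := by
    rw [← LinearMap.ker_eq_bot, LinearMap.ker_eq_bot']
    intro x hx
    exact Subtype.ext <| eq_zero_of_apply_out_eq_zero (smul_one_sub_mulVec_eq_zero_iff.mp x.2)
      fun c hc => congrFun hx ⟨c, hc⟩
  simpa [Nat.card_eq_fintype_card] using LinearMap.finrank_le_finrank_of_injective hΦ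

lemma exists_nonneg_mulVec_eq_graphEig_one [Nonempty V] :
    ∃ x : V → ℝ, x ≠ 0 ∧ 0 ≤ x ∧ adjMat G *ᵥ x = graphEig G 1 • x := by
  obtain ⟨x, hx0, hx⟩ := (adjMat_isHermitian G).exists_mulVec_eq_eig_one
  refine ⟨|x|, fun h => hx0 ?_, abs_nonneg x, mulVec_abs_eq_of_posSemidef (adjMat_nonneg G)
    (adjMat_isHermitian G).posSemidef_eig_one_smul_one_sub hx⟩
  ext v
  simpa using congrFun h v

end SimpleGraph

theorem rank_bound_top_eigenvalue_general {V : Type*} [Fintype V] [DecidableEq V]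
    (G : SimpleGraph V) (lam : ℝ) (d j : ℕ) (hlam : lam = graphEig G 1)
    (hrank : (lam • (1 : Matrix V V ℝ) - adjMat G
      + (1 / 2 : ℝ) • Matrix.of fun _ _ => (1 : ℝ)).rank ≤ d)
    (hj : j = Nat.card {c : G.ConnectedComponent //
      graphEig (SimpleGraph.induce c.supp G) 1 = lam}) :
    (lam • (1 : Matrix V V ℝ) - adjMat G).rank ≤ d - 1 ∧
      Fintype.card V ≤ d - 1 + j := by
  subst hlam hj
  set B := graphEig G 1 • (1 : Matrix V V ℝ) - adjMat G
  have hB : B.PosSemidef := G.adjMat_isHermitian.posSemidef_eig_one_smul_one_sub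
  have hrankB : B.rank ≤ d - 1 := by
    rcases isEmpty_or_nonempty V with hV | hV
    · have := B.rank_le_card_width
      rw [Fintype.card_eq_zero] at this
      omega
    obtain ⟨x, hx0, hnn, hx⟩ := G.exists_nonneg_mulVec_eq_graphEig_one
    have := hB.rank_lt_rank_add
      (Matrix.posSemidef_of_const_one.smul (by norm_num : (0 : ℝ) ≤ 1 / 2))
      (Matrix.smul_one_sub_mulVec_eq_zero_iff.mpr hx)
      (by
        rw [Matrix.smul_mulVec]
        exact smul_ne_zero (by norm_num) (Matrix.of_const_one_mulVec_ne_zero hx0 hnn))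
    omega
  have hker : Module.finrank ℝ (LinearMap.ker B.mulVecLin) ≤ Nat.card _ :=
    G.finrank_ker_graphEig_one_smul_one_sub_adjMat_le
  have := B.rank_add_finrank_ker
  omega

/-- If `λ = λ₁(G)`, the matrix `λI - A_G + (1/2)J` is positive semidefinite
with rank at most `d`, and exactly `j` connected components of `G` have largest eigenvalue
`λ`, then `rank(λI - A_G) ≤ d - 1` and `N ≤ d - 1 + j`. -/
theorem rank_bound_top_eigenvalue {V : Type*} [Fintype V] [DecidableEq V]
    (G : SimpleGraph V) (lam : ℝ) (d j : ℕ) (hlam : lam = graphEig G 1)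
    (hpsd : (lam • (1 : Matrix V V ℝ) - adjMat G
      + (1 / 2 : ℝ) • Matrix.of fun _ _ => (1 : ℝ)).PosSemidef)
    (hrank : (lam • (1 : Matrix V V ℝ) - adjMat G
      + (1 / 2 : ℝ) • Matrix.of fun _ _ => (1 : ℝ)).rank ≤ d)
    (hj : j = Nat.card {c : G.ConnectedComponent //
      graphEig (SimpleGraph.induce c.supp G) 1 = lam}) :
    (lam • (1 : Matrix V V ℝ) - adjMat G).rank ≤ d - 1 ∧
      Fintype.card V ≤ d - 1 + j :=
  rank_bound_top_eigenvalue_general G lam d j hlam hrank hj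
end
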